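/- Define λ_c(ε) := inf{ λ > 0 : there exists m ∈ H¹(𝕋²; S²) with F_{ε,λ}[m] < 0 } for 0 < ε < 1. Then the function ε ↦ λ_c(ε) is Lipschitz-continuous on every compact subset of (0,1); in particular, for every δ ∈ (0, 1/2) it is Lipschitz on [δ, 1−δ] with Lipschitz constant at most δ^{−1}(1 + 1/|log δ|)·sup_{ε∈[δ,1−δ]} λ_c(ε). -/

import Mathlib

/-!
Replacing `ε` by `ε'` multiplies the local part `∫ ε/2 |∇m|² + (1 - m₃²)/(2ε)` of the energy by at
most `r = max (ε'/ε) (ε/ε')`, so `F_{ε,λ}[m] < 0` implies `F_{ε',λ'}[m] < 0` for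
`λ' = r (|log ε'| / |log ε|) λ`. For `a ≤ b` in `(0, 1)` this gives `λ_c(b) ≤ (b/a) λ_c(a)` and
`λ_c(a) ≤ e^{θ(b) - θ(a)} λ_c(b)` with `θ(t) = log t - log |log t|`, hence, as `1 - e^{-s} ≤ s`,
`|λ_c(a) - λ_c(b)| ≤ (θ(b) - θ(a)) sup λ_c`. Finally `θ'(t) = t⁻¹ (1 + 1/|log t|)` is largest on
`[δ, 1 - δ]` at `t = δ`: as a function of `|log t|` it decreases and then increases, and its value
at `1 - δ` does not exceed its value at `δ`.
-/


open MeasureTheory Real Filter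

noncomputable section

/-- The plane `ℝ²`, modeled as functions `Fin 2 → ℝ`. -/
abbrev R2 : Type := Fin 2 → ℝ

/-- The target space `ℝ³`. -/
abbrev R3 : Type := Fin 3 → ℝ

/-- A fundamental domain for the unit torus `𝕋² = ℝ²/ℤ²`. -/
def cube : Set R2 := Set.univ.pi fun _ => Set.Ico (0 : ℝ) 1

/-- The Euclidean norm on `ℝ²`. -/
def en2 (z : R2) : ℝ := Real.sqrt (∑ i, z i ^ 2)

/-- The Euclidean norm on `ℝ³`. -/
def en3 (v : R3) : ℝ := Real.sqrt (∑ i, v i ^ 2)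

/-- `|∇f(x)|²` for a scalar function. -/
def gradNormSq (f : R2 → ℝ) (x : R2) : ℝ :=
  ∑ j, (fderiv ℝ f x (Pi.single j 1)) ^ 2

/-- `|∇f(x)|` for a scalar function. -/
def gradNorm (f : R2 → ℝ) (x : R2) : ℝ := Real.sqrt (gradNormSq f x)

/-- `|∇m(x)|²` for a map `m : ℝ² → ℝ³` (Frobenius norm squared). -/
def gradVSq (m : R2 → R3) (x : R2) : ℝ :=
  ∑ j, ∑ i, (fderiv ℝ m x (Pi.single j 1) i) ^ 2

/-- The squared homogeneous `H^{1/2}` seminorm on the torus (real-space formula). -/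
def H12 (f : R2 → ℝ) : ℝ :=
  (1 / (4 * π)) * ∫ x in cube, ∫ z : R2, (f (x + z) - f x) ^ 2 / en2 z ^ 3

/-- A (strong) magnetization in `H¹(𝕋²; S²)`: a continuously differentiable
`ℤ²`-periodic map with values in the unit sphere `S² ⊂ ℝ³`. -/
def Mag (m : R2 → R3) : Prop :=
  ContDiff ℝ 1 m ∧
    (∀ (x : R2) (n : Fin 2 → ℤ), m (x + fun i => (n i : ℝ)) = m x) ∧
    ∀ x, ∑ i, (m x i) ^ 2 = 1

/-- The reduced thin-film energy `F_{ε,λ}`. -/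
def Fen (ε lam : ℝ) (m : R2 → R3) : ℝ :=
  (∫ x in cube, (ε / 2 * gradVSq m x + (1 - (m x 2) ^ 2) / (2 * ε)))
    - lam / |Real.log ε| * H12 (fun x => m x 2)

/-- The north pole `e₃ = (0,0,1)`. -/
def e3 : R3 := ![0, 0, 1]

/-- The critical threshold `λ_c(ε)`: the infimum of the `λ > 0` for which the minimal
energy `min F_{ε,λ}` becomes negative. -/
def lamCrit (ε : ℝ) : ℝ :=
  sInf {lam : ℝ | 0 < lam ∧ ∃ m : R2 → R3, Mag m ∧ Fen ε lam m < 0}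

open Set

def negEnergySet (ε : ℝ) : Set ℝ :=
  {lam : ℝ | 0 < lam ∧ ∃ m : R2 → R3, Mag m ∧ Fen ε lam m < 0}

lemma lamCrit_eq_sInf (ε : ℝ) : lamCrit ε = sInf (negEnergySet ε) := rfl

lemma lamCrit_nonneg (ε : ℝ) : 0 ≤ lamCrit ε :=
  Real.sInf_nonneg fun _ h => h.1.le

lemma measurableSet_cube : MeasurableSet cube :=
  MeasurableSet.univ_pi fun _ => measurableSet_Ico

lemma Continuous.integrableOn_cube {f : R2 → ℝ} (hf : Continuous f) : IntegrableOn f cube :=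
  (hf.continuousOn.integrableOn_compact (isCompact_univ_pi fun _ => isCompact_Icc)).mono_set
    fun _ hx i hi => Ico_subset_Icc_self (hx i hi)

lemma gradVSq_nonneg (m : R2 → R3) (x : R2) : 0 ≤ gradVSq m x := by
  unfold gradVSq
  positivity

lemma continuous_gradVSq {m : R2 → R3} (hm : ContDiff ℝ 1 m) : Continuous (gradVSq m) := by
  have := hm.continuous_fderiv one_ne_zero
  unfold gradVSq
  fun_prop

lemma H12_nonneg (f : R2 → ℝ) : 0 ≤ H12 f := by
  refine mul_nonneg (by positivity) <| setIntegral_nonneg measurableSet_cube fun x _ =>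
    integral_nonneg fun z => ?_
  have : 0 ≤ en2 z := Real.sqrt_nonneg _
  positivity

lemma Mag.sq_le_one {m : R2 → R3} (hm : Mag m) (x : R2) (i : Fin 3) : m x i ^ 2 ≤ 1 :=
  hm.2.2 x ▸ Finset.single_le_sum (fun j _ => sq_nonneg (m x j)) (Finset.mem_univ i)

lemma abs_log_pos {t : ℝ} (ht : t ∈ Ioo (0 : ℝ) 1) : 0 < |log t| :=
  abs_pos.2 (log_neg ht.1 ht.2).ne

lemma Fen_le_mul_Fen {m : R2 → R3} (hm : Mag m) {x y r : ℝ} (hx : x ∈ Ioo (0 : ℝ) 1)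
    (hy : y ∈ Ioo (0 : ℝ) 1) (hyx : y ≤ r * x) (hxy : x ≤ r * y) (lam : ℝ) :
    Fen y (r * (|log y| / |log x|) * lam) m ≤ r * Fen x lam m := by
  have hcont : ∀ ε, Continuous fun p => ε / 2 * gradVSq m p + (1 - m p 2 ^ 2) / (2 * ε) := by
    have := continuous_gradVSq hm.1
    have := hm.1.continuous
    fun_prop
  have hlocal : ∫ p in cube, (y / 2 * gradVSq m p + (1 - m p 2 ^ 2) / (2 * y))
      ≤ r * ∫ p in cube, (x / 2 * gradVSq m p + (1 - m p 2 ^ 2) / (2 * x)) := by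
    rw [← integral_const_mul]
    refine setIntegral_mono_on (hcont y).integrableOn_cube
      ((hcont x).integrableOn_cube.const_mul r) measurableSet_cube fun p _ => ?_
    have hG := gradVSq_nonneg m p
    have hP : 0 ≤ 1 - m p 2 ^ 2 := sub_nonneg.2 (hm.sq_le_one p 2)
    have hexch : y / 2 * gradVSq m p ≤ r * (x / 2 * gradVSq m p) := by nlinarith
    have hanis : (1 - m p 2 ^ 2) / (2 * y) ≤ r * ((1 - m p 2 ^ 2) / (2 * x)) := by
      rw [mul_div_assoc', div_le_div_iff₀ (by linarith [hy.1]) (by linarith [hx.1])]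
      nlinarith
    linarith
  have hnonlocal : r * (|log y| / |log x|) * lam / |log y| = r * (lam / |log x|) := by
    field_simp [(abs_log_pos hx).ne', (abs_log_pos hy).ne']
  unfold Fen
  rw [hnonlocal]
  linear_combination hlocal

lemma mul_mem_negEnergySet {x y r lam : ℝ} (hx : x ∈ Ioo (0 : ℝ) 1) (hy : y ∈ Ioo (0 : ℝ) 1)
    (hyx : y ≤ r * x) (hxy : x ≤ r * y) (hlam : lam ∈ negEnergySet x) :
    r * (|log y| / |log x|) * lam ∈ negEnergySet y := by
  obtain ⟨hlam, m, hm, hneg⟩ := hlam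
  have hr : 0 < r := by nlinarith [hx.1, hy.1]
  refine ⟨mul_pos (mul_pos hr (div_pos (abs_log_pos hy) (abs_log_pos hx))) hlam, m, hm, ?_⟩
  exact (Fen_le_mul_Fen hm hx hy hyx hxy lam).trans_lt (mul_neg_of_pos_of_neg hr hneg)

lemma lamCrit_le_mul_lamCrit {x y r : ℝ} (hx : x ∈ Ioo (0 : ℝ) 1) (hy : y ∈ Ioo (0 : ℝ) 1)
    (hyx : y ≤ r * x) (hxy : x ≤ r * y) :
    lamCrit y ≤ r * (|log y| / |log x|) * lamCrit x := by
  rcases (negEnergySet x).eq_empty_or_nonempty with hempty | hne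
  · have : negEnergySet y = ∅ := eq_empty_of_forall_notMem fun lam hlam => by
      simpa [hempty] using mul_mem_negEnergySet hy hx hxy hyx hlam
    simp [lamCrit_eq_sInf, this, hempty]
  · have hc : 0 ≤ r * (|log y| / |log x|) := by
      have : 0 < r := by nlinarith [hx.1, hy.1]
      positivity
    rw [lamCrit_eq_sInf, lamCrit_eq_sInf, ← smul_eq_mul, ← Real.sInf_smul_of_nonneg hc]
    exact csInf_le_csInf ⟨0, fun _ h => h.1.le⟩ hne.smul_set
      (smul_set_subset_iff.2 fun lam hlam => mul_mem_negEnergySet hx hy hyx hxy hlam)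

lemma abs_log_le_abs_log_of_le {a b : ℝ} (ha : 0 < a) (hab : a ≤ b) (hb : b < 1) :
    |log b| ≤ |log a| := by
  rw [abs_of_neg (log_neg (ha.trans_le hab) hb), abs_of_neg (log_neg ha (hab.trans_lt hb)),
    neg_le_neg_iff]
  exact log_le_log ha hab

lemma le_div_mul_self_of_le {a b : ℝ} (ha : 0 < a) (hab : a ≤ b) : a ≤ b / a * b := by
  rw [div_mul_eq_mul_div, le_div_iff₀ ha]
  nlinarith

lemma lamCrit_le_div_mul_lamCrit {a b : ℝ} (ha : a ∈ Ioo (0 : ℝ) 1) (hb : b ∈ Ioo (0 : ℝ) 1)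
    (hab : a ≤ b) : lamCrit b ≤ b / a * lamCrit a := by
  have hlog : |log b| / |log a| ≤ 1 :=
    (div_le_one (abs_log_pos ha)).2 (abs_log_le_abs_log_of_le ha.1 hab hb.2)
  calc lamCrit b ≤ b / a * (|log b| / |log a|) * lamCrit a :=
        lamCrit_le_mul_lamCrit ha hb (div_mul_cancel₀ b ha.1.ne').ge (le_div_mul_self_of_le ha.1 hab)
    _ ≤ b / a * lamCrit a :=
        mul_le_mul_of_nonneg_right (mul_le_of_le_one_right (div_nonneg hb.1.le ha.1.le) hlog)
          (lamCrit_nonneg a)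

def scalePotential (t : ℝ) : ℝ := log t - log (-log t)

lemma exp_scalePotential_sub {a b : ℝ} (ha : a ∈ Ioo (0 : ℝ) 1) (hb : b ∈ Ioo (0 : ℝ) 1) :
    exp (scalePotential b - scalePotential a) = b / a * (|log a| / |log b|) := by
  have hla := neg_pos.2 (log_neg ha.1 ha.2)
  have hlb := neg_pos.2 (log_neg hb.1 hb.2)
  rw [abs_of_neg (log_neg ha.1 ha.2), abs_of_neg (log_neg hb.1 hb.2), scalePotential,
    scalePotential, show log b - log (-log b) - (log a - log (-log a))
      = (log b - log a) + (log (-log a) - log (-log b)) by ring,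
    exp_add, exp_sub, exp_sub, exp_log ha.1, exp_log hb.1, exp_log hla, exp_log hlb]

lemma scalePotential_mono {a b : ℝ} (ha : 0 < a) (hab : a ≤ b) (hb : b < 1) :
    scalePotential a ≤ scalePotential b := by
  have hloga := log_le_log ha hab
  have := log_le_log (neg_pos.2 (log_neg (ha.trans_le hab) hb)) (neg_le_neg hloga)
  unfold scalePotential
  linarith

lemma lamCrit_le_exp_mul_lamCrit {a b : ℝ} (ha : a ∈ Ioo (0 : ℝ) 1) (hb : b ∈ Ioo (0 : ℝ) 1)
    (hab : a ≤ b) :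
    lamCrit a ≤ exp (scalePotential b - scalePotential a) * lamCrit b ∧
      lamCrit b ≤ exp (scalePotential b - scalePotential a) * lamCrit a := by
  have hlog : 1 ≤ |log a| / |log b| :=
    (one_le_div (abs_log_pos hb)).2 (abs_log_le_abs_log_of_le ha.1 hab hb.2)
  rw [exp_scalePotential_sub ha hb]
  refine ⟨lamCrit_le_mul_lamCrit hb ha (le_div_mul_self_of_le ha.1 hab)
    (div_mul_cancel₀ b ha.1.ne').ge, (lamCrit_le_div_mul_lamCrit ha hb hab).trans ?_⟩
  exact mul_le_mul_of_nonneg_right (le_mul_of_one_le_right (div_nonneg hb.1.le ha.1.le) hlog)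
    (lamCrit_nonneg a)

lemma sub_le_mul_of_le_exp_mul {p q s M : ℝ} (hp : 0 ≤ p) (hs : 0 ≤ s) (hpq : p ≤ exp s * q)
    (hpM : p ≤ M) : p - q ≤ s * M := by
  have hq : exp (-s) * p ≤ q := by
    rw [exp_neg]
    exact (inv_mul_le_iff₀ (exp_pos s)).2 hpq
  have hexp : 1 - exp (-s) ≤ s := by linarith [add_one_le_exp (-s)]
  calc p - q ≤ (1 - exp (-s)) * p := by linarith
    _ ≤ s * p := mul_le_mul_of_nonneg_right hexp hp
    _ ≤ s * M := mul_le_mul_of_nonneg_left hpM hs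

lemma abs_sub_le_mul_of_le_exp_mul {p q s M : ℝ} (hp : 0 ≤ p) (hq : 0 ≤ q) (hs : 0 ≤ s)
    (hpq : p ≤ exp s * q) (hqp : q ≤ exp s * p) (hpM : p ≤ M) (hqM : q ≤ M) :
    |p - q| ≤ s * M :=
  abs_sub_le_iff.2 ⟨sub_le_mul_of_le_exp_mul hp hs hpq hpM, sub_le_mul_of_le_exp_mul hq hs hqp hqM⟩

lemma mem_Ioo_of_mem_Icc {δ t : ℝ} (hδ : 0 < δ) (ht : t ∈ Icc δ (1 - δ)) : t ∈ Ioo (0 : ℝ) 1 :=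
  ⟨hδ.trans_le ht.1, ht.2.trans_lt (by linarith)⟩

lemma bddAbove_lamCrit_image {δ : ℝ} (hδ : 0 < δ) : BddAbove (lamCrit '' Icc δ (1 - δ)) := by
  refine ⟨δ⁻¹ * lamCrit δ, forall_mem_image.2 fun t ht => ?_⟩
  have hδI : δ ∈ Ioo (0 : ℝ) 1 := ⟨hδ, by linarith [ht.1.trans ht.2]⟩
  have htI := mem_Ioo_of_mem_Icc hδ ht
  calc lamCrit t ≤ t / δ * lamCrit δ := lamCrit_le_div_mul_lamCrit hδI htI ht.1
    _ ≤ δ⁻¹ * lamCrit δ := by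
        rw [div_eq_inv_mul]
        exact mul_le_mul_of_nonneg_right (mul_le_of_le_one_right (inv_nonneg.2 hδ.le) htI.2.le)
          (lamCrit_nonneg δ)

def lipWeight (t : ℝ) : ℝ := t⁻¹ * (1 + 1 / |log t|)

lemma hasDerivAt_scalePotential {t : ℝ} (ht : t ∈ Ioo (0 : ℝ) 1) :
    HasDerivAt scalePotential (lipWeight t) t := by
  have hlog := log_neg ht.1 ht.2
  have hneg : HasDerivAt (fun s => -log s) (-t⁻¹) t := (hasDerivAt_log ht.1.ne').neg
  have h : HasDerivAt (fun s => log s - log (-log s)) (t⁻¹ - -t⁻¹ / -log t) t :=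
    (hasDerivAt_log ht.1.ne').sub (hneg.log (neg_pos.2 hlog).ne')
  refine h.congr_deriv ?_
  rw [lipWeight, abs_of_neg hlog]
  field_simp
  ring

lemma lipWeight_eq_exp_mul {t : ℝ} (ht : t ∈ Ioo (0 : ℝ) 1) :
    lipWeight t = exp (-log t) * (1 + 1 / (-log t)) := by
  rw [lipWeight, abs_of_neg (log_neg ht.1 ht.2), exp_neg, exp_log ht.1]

lemma hasDerivAt_exp_mul_one_add_one_div {L : ℝ} (hL : L ≠ 0) :
    HasDerivAt (fun L => exp L * (1 + 1 / L)) (exp L * (L ^ 2 + L - 1) / L ^ 2) L := by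
  have h : HasDerivAt (fun L => exp L * (1 + L⁻¹)) (exp L * (1 + L⁻¹) + exp L * -(L ^ 2)⁻¹) L :=
    (hasDerivAt_exp L).mul ((hasDerivAt_inv hL).const_add 1)
  simp only [one_div]
  refine h.congr_deriv ?_
  field_simp
  ring

/-- `L ↦ e^L (1 + 1/L)` decreases up to the root `-ψ = φ⁻¹` of `L² + L - 1` and increases after. -/
lemma exp_mul_one_add_one_div_le_max {p L q : ℝ} (hp : 0 < p) (hpL : p ≤ L) (hLq : L ≤ q) :
    exp L * (1 + 1 / L) ≤ max (exp p * (1 + 1 / p)) (exp q * (1 + 1 / q)) := by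
  set τ := -goldenConj
  have hτ : τ ^ 2 + τ = 1 := by
    simp only [τ, neg_sq, goldenConj_sq]
    ring
  have hτ0 : 0 < τ := neg_pos.2 goldenConj_neg
  have hderiv : ∀ x, p ≤ x → HasDerivAt (fun L => exp L * (1 + 1 / L))
      (exp x * (x ^ 2 + x - 1) / x ^ 2) x :=
    fun x hx => hasDerivAt_exp_mul_one_add_one_div (hp.trans_le hx).ne'
  have hcont : ∀ r, p ≤ r → ContinuousOn (fun L => exp L * (1 + 1 / L)) (Icc r q) :=
    fun r hr x hx => (hderiv x (hr.trans hx.1)).continuousAt.continuousWithinAt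
  rcases le_total L τ with hLτ | hτL
  · have hanti : AntitoneOn (fun L => exp L * (1 + 1 / L)) (Icc p L) := by
      refine antitoneOn_of_hasDerivWithinAt_nonpos (convex_Icc p L)
        ((hcont p le_rfl).mono (Icc_subset_Icc_right hLq))
        (fun x hx => (hderiv x (interior_subset hx).1).hasDerivWithinAt) fun x hx => ?_
      rw [interior_Icc] at hx
      have hx0 : 0 < x := hp.trans hx.1
      have : x ^ 2 + x - 1 ≤ 0 := by nlinarith [hx.2]
      exact div_nonpos_of_nonpos_of_nonneg
        (mul_nonpos_of_nonneg_of_nonpos (exp_pos x).le this) (sq_nonneg x)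
    exact le_max_of_le_left (hanti ⟨le_rfl, hpL⟩ ⟨hpL, le_rfl⟩ hpL)
  · have hmono : MonotoneOn (fun L => exp L * (1 + 1 / L)) (Icc L q) := by
      refine monotoneOn_of_hasDerivWithinAt_nonneg (convex_Icc L q) (hcont L hpL)
        (fun x hx => (hderiv x (hpL.trans (interior_subset hx).1)).hasDerivWithinAt)
        fun x hx => ?_
      rw [interior_Icc] at hx
      have : 0 ≤ x ^ 2 + x - 1 := by nlinarith [hx.1]
      exact div_nonneg (mul_nonneg (exp_pos x).le this) (sq_nonneg x)
    exact le_max_of_le_right (hmono ⟨le_rfl, hLq⟩ ⟨hLq, le_rfl⟩ hLq)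

lemma lipWeight_le_max {δ t : ℝ} (hδ : 0 < δ) (ht : t ∈ Icc δ (1 - δ)) :
    lipWeight t ≤ max (lipWeight (1 - δ)) (lipWeight δ) := by
  have hδ2 : δ ≤ 1 / 2 := by linarith [ht.1.trans ht.2]
  have hδI : δ ∈ Ioo (0 : ℝ) 1 := ⟨hδ, by linarith⟩
  have hδI' : 1 - δ ∈ Ioo (0 : ℝ) 1 := ⟨by linarith, by linarith⟩
  have htI := mem_Ioo_of_mem_Icc hδ ht
  rw [lipWeight_eq_exp_mul htI, lipWeight_eq_exp_mul hδI, lipWeight_eq_exp_mul hδI']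
  exact exp_mul_one_add_one_div_le_max (neg_pos.2 (log_neg hδI'.1 hδI'.2))
    (neg_le_neg (log_le_log htI.1 ht.2)) (neg_le_neg (log_le_log hδ ht.1))

lemma log_le_log_add_div_sub_one {x c : ℝ} (hx : 0 < x) (hc : 0 < c) :
    log x ≤ log c + x / c - 1 := by
  have := log_le_sub_one_of_pos (div_pos hx hc)
  rw [log_div hx.ne' hc.ne'] at this
  linarith

lemma chord_le_log {p q x : ℝ} (hp : 0 < p) (hpx : p ≤ x) (hxq : x ≤ q) (hpq : p < q) :
    ((q - x) * log p + (x - p) * log q) / (q - p) ≤ log x := by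
  have hqp : 0 < q - p := by linarith
  have h := strictConcaveOn_log_Ioi.concaveOn.2 (mem_Ioi.2 hp) (mem_Ioi.2 (hp.trans hpq))
    (div_nonneg (by linarith : 0 ≤ q - x) hqp.le) (div_nonneg (by linarith : 0 ≤ x - p) hqp.le)
    (by field_simp; ring)
  simp only [smul_eq_mul] at h
  rw [show (q - x) / (q - p) * p + (x - p) / (q - p) * q = x by field_simp; ring] at h
  calc ((q - x) * log p + (x - p) * log q) / (q - p)
      = (q - x) / (q - p) * log p + (x - p) / (q - p) * log q := by ring
    _ ≤ log x := h

/-- Cross-multiplied, the inequality is increasing in `-log (1 - δ)`, and decreasing in `-log δ`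
unless it holds trivially. -/
lemma lipWeight_one_sub_le_of_bounds {δ U V : ℝ} (hδ : 0 < δ) (hδ2 : δ ≤ 1 / 2)
    (hU : U ≤ -log (1 - δ)) (hV : -log δ ≤ V)
    (hP : 0 ≤ U * (1 - δ) + V * (U * (1 - 2 * δ) - δ)) :
    lipWeight (1 - δ) ≤ lipWeight δ := by
  have hlogu := log_neg (by linarith : 0 < 1 - δ) (by linarith)
  have hlogv := log_neg hδ (by linarith)
  rw [lipWeight, lipWeight, abs_of_neg hlogu, abs_of_neg hlogv]
  set u := -log (1 - δ)
  set v := -log δ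
  have hu : 0 < u := neg_pos.2 hlogu
  have hv : 0 < v := neg_pos.2 hlogv
  have key : δ * v * (1 + u) ≤ (1 - δ) * u * (1 + v) := by
    have hBU : U * (1 - 2 * δ) - δ ≤ u * (1 - 2 * δ) - δ := by nlinarith
    rcases le_or_gt 0 (U * (1 - 2 * δ) - δ) with hB | hB
    · nlinarith [mul_nonneg hv.le (hB.trans hBU), mul_nonneg hu.le (by linarith : 0 ≤ 1 - δ)]
    · have hVB : V * (U * (1 - 2 * δ) - δ) ≤ v * (u * (1 - 2 * δ) - δ) := by
        nlinarith [mul_nonneg (sub_nonneg.2 hV) (neg_nonneg.2 hB.le),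
          mul_nonneg hv.le (sub_nonneg.2 hBU)]
      nlinarith [mul_nonneg (sub_nonneg.2 hU) (by linarith : 0 ≤ 1 - δ)]
  rw [show (1 - δ)⁻¹ * (1 + 1 / u) = (1 + u) / ((1 - δ) * u) by field_simp; ring,
    show δ⁻¹ * (1 + 1 / v) = (1 + v) / (δ * v) by field_simp; ring,
    div_le_div_iff₀ (mul_pos (by linarith) hu) (mul_pos hδ hv)]
  linarith

lemma quarter_threeEighths_poly_nonneg {d : ℝ} (hd1 : 1 / 4 ≤ d) (hd2 : d ≤ 3 / 8) :
    0 ≤ (0.2869 + 4 / 3 * (d - 1 / 4)) * (1 - d)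
      + (1.38629437 - 3.2372 * (d - 1 / 4))
        * ((0.2869 + 4 / 3 * (d - 1 / 4)) * (1 - 2 * d) - d) := by
  have h1 : 0 ≤ d - 1 / 4 := by linarith
  have h2 : 0 ≤ 3 / 8 - d := by linarith
  nlinarith [mul_nonneg h1 h2, mul_nonneg (mul_nonneg h1 h2) h1, mul_nonneg (mul_nonneg h1 h2) h2]

lemma threeEighths_half_poly_nonneg {c d : ℝ} (hd1 : 3 / 8 ≤ d) (hd2 : d ≤ 1 / 2)
    (hc1 : 0.6931471803 < c) (hc2 : c < 0.6931471808) :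
    0 ≤ (c + 2 * d - 1) * (1 - d)
      + (c + (16 * c - 8 * 1.0978) * (1 / 2 - d)) * ((c + 2 * d - 1) * (1 - 2 * d) - d) := by
  obtain ⟨w, rfl⟩ : ∃ w, d = 1 / 2 - w := ⟨1 / 2 - d, by ring⟩
  have hw0 : 0 ≤ w := by linarith
  have hw1 : 0 ≤ 1 / 8 - w := by linarith
  have e1 : 0 ≤ c - 0.6931471803 := by linarith
  have e2 : 0 ≤ 0.6931471808 - c := by linarith
  have hQ : 0 ≤ (2 * c ^ 2 + 2 * c - 1 - (16 * c - 8 * 1.0978) / 2)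
      + w * ((2 * c + 1) * (16 * c - 8 * 1.0978) - 4 * c - 2)
      - 4 * (16 * c - 8 * 1.0978) * w ^ 2 := by
    nlinarith [mul_nonneg hw0 hw1, mul_nonneg hw0 e1, mul_nonneg hw0 e2, mul_nonneg e1 e2,
      mul_nonneg (mul_nonneg hw0 hw0) e1, mul_nonneg (mul_nonneg hw0 hw0) e2,
      mul_nonneg (mul_nonneg hw0 hw1) e1, mul_nonneg (mul_nonneg hw0 hw1) e2]
  nlinarith [mul_nonneg hw0 hQ]

lemma log_three_div_eight : log (3 / 8 : ℝ) = log 3 - 3 * log 2 := by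
  rw [log_div (by norm_num) (by norm_num), show (8 : ℝ) = 2 ^ 3 by norm_num, log_pow]
  push_cast
  ring

/- The bounds below are tangent lines of `-log (1 - δ)` and chords of `-log δ` through
`δ = 1/4, 3/8, 1/2`; near `δ = 1/2` little room is left, as the inequality is an equality there. -/

lemma lipWeight_one_sub_le_of_le_quarter {δ : ℝ} (hδ : 0 < δ) (h14 : δ ≤ 1 / 4) :
    lipWeight (1 - δ) ≤ lipWeight δ := by
  have hU : δ ≤ -log (1 - δ) := by linarith [log_le_sub_one_of_pos (by linarith : 0 < 1 - δ)]
  have hδv : δ * -log δ ≤ exp (-1) := by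
    simpa [exp_neg, exp_log hδ, mul_comm] using mul_exp_neg_le_exp_neg_one (-log δ)
  have he : exp (-1) < 3 / 8 := by
    rw [exp_neg]
    exact inv_lt_of_inv_lt₀ (by norm_num) (by linarith [exp_one_gt_d9])
  refine lipWeight_one_sub_le_of_bounds hδ (by linarith) hU le_rfl ?_
  nlinarith [mul_nonneg hδ.le (by linarith : 0 ≤ 1 - δ - 2 * (δ * -log δ))]

lemma lipWeight_one_sub_le_of_mem_Icc_quarter {δ : ℝ} (hδ : δ ∈ Icc (1 / 4 : ℝ) (3 / 8)) :
    lipWeight (1 - δ) ≤ lipWeight δ := by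
  have hL2 := log_two_gt_d9
  have hL3 := log_three_gt_d9
  refine lipWeight_one_sub_le_of_bounds (by linarith [hδ.1]) (by linarith [hδ.2]) ?_ ?_
    (quarter_threeEighths_poly_nonneg hδ.1 hδ.2)
  · have h := log_le_log_add_div_sub_one (by linarith [hδ.2] : 0 < 1 - δ)
      (by norm_num : (0 : ℝ) < 3 / 4)
    rw [log_div (by norm_num) (by norm_num), show (4 : ℝ) = 2 ^ 2 by norm_num, log_pow] at h
    push_cast at h
    linarith [log_three_lt_d9]
  · have h := chord_le_log (by norm_num) hδ.1 hδ.2 (by norm_num)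
    rw [log_three_div_eight, one_div, log_inv, show (4 : ℝ) = 2 ^ 2 by norm_num, log_pow] at h
    norm_num at h
    nlinarith [log_two_lt_d9, mul_nonneg (by linarith [hδ.1] : 0 ≤ δ - 1 / 4)
      (by linarith [log_two_lt_d9] : 0 ≤ 8 * log 3 - 8 * log 2 - 3.2372)]

lemma lipWeight_one_sub_le_of_mem_Icc_threeEighths {δ : ℝ} (hδ : δ ∈ Icc (3 / 8 : ℝ) (1 / 2)) :
    lipWeight (1 - δ) ≤ lipWeight δ := by
  have hlog2 : log (1 / 2 : ℝ) = -log 2 := by rw [one_div, log_inv]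
  refine lipWeight_one_sub_le_of_bounds (by linarith [hδ.1]) hδ.2 ?_ ?_
    (threeEighths_half_poly_nonneg hδ.1 hδ.2 log_two_gt_d9 log_two_lt_d9)
  · have h := log_le_log_add_div_sub_one (by linarith [hδ.2] : 0 < 1 - δ)
      (by norm_num : (0 : ℝ) < 1 / 2)
    rw [hlog2] at h
    linarith
  · have h := chord_le_log (by norm_num) hδ.1 hδ.2 (by norm_num : (3 / 8 : ℝ) < 1 / 2)
    rw [log_three_div_eight, hlog2] at h
    norm_num at h
    nlinarith [log_three_gt_d9, mul_nonneg (by linarith [hδ.2] : 0 ≤ 1 / 2 - δ)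
      (by linarith [log_three_gt_d9] : 0 ≤ log 3 - 1.0978)]

lemma lipWeight_one_sub_le {δ : ℝ} (hδ : 0 < δ) (hδ2 : δ ≤ 1 / 2) :
    lipWeight (1 - δ) ≤ lipWeight δ := by
  rcases le_or_gt δ (1 / 4) with h14 | h14
  · exact lipWeight_one_sub_le_of_le_quarter hδ h14
  rcases le_or_gt δ (3 / 8) with h38 | h38
  · exact lipWeight_one_sub_le_of_mem_Icc_quarter ⟨h14.le, h38⟩
  · exact lipWeight_one_sub_le_of_mem_Icc_threeEighths ⟨h38.le, hδ2⟩

lemma lipWeight_le {δ t : ℝ} (hδ : 0 < δ) (ht : t ∈ Icc δ (1 - δ)) : lipWeight t ≤ lipWeight δ :=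
  (lipWeight_le_max hδ ht).trans
    (max_le (lipWeight_one_sub_le hδ (by linarith [ht.1.trans ht.2])) le_rfl)

lemma scalePotential_sub_le {δ a b : ℝ} (hδ : 0 < δ) (ha : a ∈ Icc δ (1 - δ))
    (hb : b ∈ Icc δ (1 - δ)) (hab : a ≤ b) :
    scalePotential b - scalePotential a ≤ lipWeight δ * (b - a) := by
  have hderiv : ∀ t ∈ Icc δ (1 - δ), HasDerivAt scalePotential (lipWeight t) t :=
    fun t ht => hasDerivAt_scalePotential (mem_Ioo_of_mem_Icc hδ ht)
  refine (convex_Icc δ (1 - δ)).image_sub_le_mul_sub_of_deriv_le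
    (fun t ht => (hderiv t ht).continuousAt.continuousWithinAt)
    (fun t ht => (hderiv t (interior_subset ht)).differentiableAt.differentiableWithinAt)
    (fun t ht => ?_) a ha b hb hab
  rw [(hderiv t (interior_subset ht)).deriv]
  exact lipWeight_le hδ (interior_subset ht)

lemma abs_lamCrit_sub_le {δ a b : ℝ} (hδ : 0 < δ) (ha : a ∈ Icc δ (1 - δ))
    (hb : b ∈ Icc δ (1 - δ)) :
    |lamCrit a - lamCrit b| ≤ lipWeight δ * sSup (lamCrit '' Icc δ (1 - δ)) * |a - b| := by
  wlog hab : a ≤ b generalizing a b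
  · rw [abs_sub_comm, abs_sub_comm a]
    exact this hb ha (le_of_not_ge hab)
  have haI := mem_Ioo_of_mem_Icc hδ ha
  have hbI := mem_Ioo_of_mem_Icc hδ hb
  have hM : ∀ t ∈ Icc δ (1 - δ), lamCrit t ≤ sSup (lamCrit '' Icc δ (1 - δ)) :=
    fun t ht => le_csSup (bddAbove_lamCrit_image hδ) (mem_image_of_mem _ ht)
  obtain ⟨hab_exp, hba_exp⟩ := lamCrit_le_exp_mul_lamCrit haI hbI hab
  calc |lamCrit a - lamCrit b|
      ≤ (scalePotential b - scalePotential a) * sSup (lamCrit '' Icc δ (1 - δ)) :=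
        abs_sub_le_mul_of_le_exp_mul (lamCrit_nonneg a) (lamCrit_nonneg b)
          (sub_nonneg.2 (scalePotential_mono haI.1 hab hbI.2)) hab_exp hba_exp (hM a ha) (hM b hb)
    _ ≤ lipWeight δ * (b - a) * sSup (lamCrit '' Icc δ (1 - δ)) :=
        mul_le_mul_of_nonneg_right (scalePotential_sub_le hδ ha hb hab)
          ((lamCrit_nonneg a).trans (hM a ha))
    _ = lipWeight δ * sSup (lamCrit '' Icc δ (1 - δ)) * |a - b| := by
        rw [abs_sub_comm, abs_of_nonneg (sub_nonneg.2 hab)]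
        ring

lemma exists_subset_Icc_of_isCompact {K : Set ℝ} (hK : IsCompact K) (hK01 : K ⊆ Ioo 0 1) :
    ∃ δ, 0 < δ ∧ K ⊆ Icc δ (1 - δ) := by
  rcases K.eq_empty_or_nonempty with rfl | hne
  · exact ⟨1, one_pos, empty_subset _⟩
  obtain ⟨t₀, ht₀, hmin⟩ := hK.exists_isMinOn hne
    (f := fun t => min t (1 - t)) (by fun_prop : Continuous fun t : ℝ => min t (1 - t)).continuousOn
  refine ⟨min t₀ (1 - t₀), lt_min (hK01 ht₀).1 (by linarith [(hK01 ht₀).2]), fun t ht => ?_⟩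
  have h := isMinOn_iff.1 hmin t ht
  exact ⟨h.trans (min_le_left _ _), by linarith [min_le_right t (1 - t)]⟩

/-- Lemma `le:cont-lambda`: `ε ↦ λ_c(ε)` is Lipschitz-continuous on
compact subsets of `(0,1)`; on `[δ, 1-δ]` the Lipschitz constant is at most
`δ⁻¹(1 + 1/|log δ|) · sup λ_c`. -/
theorem stmt_19 :
    (∀ K : Set ℝ, K ⊆ Set.Ioo (0 : ℝ) 1 → IsCompact K →
      ∃ L : NNReal, LipschitzOnWith L lamCrit K) ∧
    ∀ δ : ℝ, 0 < δ → δ < 1 / 2 →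
      ∀ x ∈ Set.Icc δ (1 - δ), ∀ y ∈ Set.Icc δ (1 - δ),
        |lamCrit x - lamCrit y| ≤
          δ⁻¹ * (1 + 1 / |Real.log δ|) * sSup (lamCrit '' Set.Icc δ (1 - δ)) * |x - y| := by
  refine ⟨fun K hK01 hK => ?_, fun δ hδ _ x hx y hy => abs_lamCrit_sub_le hδ hx hy⟩
  obtain ⟨δ, hδ, hKδ⟩ := exists_subset_Icc_of_isCompact hK hK01
  exact ⟨_, LipschitzOnWith.of_dist_le' fun x hx y hy =>
    abs_lamCrit_sub_le hδ (hKδ hx) (hKδ hy)⟩
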